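/- Let I be a finite index set and ω : I → ℝ, s : ℝ → I → ℝ differentiable with s_i(x) > 0 and ∑_i s_i(x) = 1, and γ_i > 0 constants. Suppose the portfolio shares satisfy ω_i(x) = γ̄(x)/γ_i where γ̄(x) = (∑_j s_j(x)/γ_j)^{-1}, and define the risk premium RP(x) = γ̄(x)·σ² for a constant σ² > 0. Then RP'(x) = γ̄(x)·σ² · ∑_i s_i'(x)·(1 - ω_i(x)). -/

import Mathlib

/-!
Write `S = ∑ i, s_i / γ_i`, so that `RP = σ² / S` and `ω_i = S⁻¹ / γ_i`. Differentiating,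
`RP' = -σ² S' / S²` with `S' = ∑ i, s_i' / γ_i`. Since the wealth shares always sum to one,
`∑ i, s_i' = 0`, so `RP · ∑ i, s_i' (1 - ω_i) = -RP · S⁻¹ · S'`, which is the same quantity.
-/

open Finset

theorem sum_deriv_eq_zero_of_sum_eq_const {𝕜 F ι : Type*} [NontriviallyNormedField 𝕜]
    [NormedAddCommGroup F] [NormedSpace 𝕜 F] [Fintype ι] {s : ι → 𝕜 → F} {c : F} {x : 𝕜}
    (hdiff : ∀ i, DifferentiableAt 𝕜 (s i) x) (hsum : ∀ y, ∑ i, s i y = c) :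
    ∑ i, deriv (s i) x = 0 := by
  rw [← deriv_fun_sum fun i _ => hdiff i, funext hsum, deriv_const]

theorem hasDerivAt_inv_sum_div {𝕜 ι : Type*} [NontriviallyNormedField 𝕜] [Fintype ι]
    {s : ι → 𝕜 → 𝕜} {s' : ι → 𝕜} {γ : ι → 𝕜} {x : 𝕜} (hs : ∀ i, HasDerivAt (s i) (s' i) x)
    (hS : ∑ i, s i x / γ i ≠ 0) :
    HasDerivAt (fun y => (∑ i, s i y / γ i)⁻¹)
      (-(∑ i, s' i / γ i) / (∑ i, s i x / γ i) ^ 2) x :=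
  (HasDerivAt.fun_sum fun i _ => (hs i).div_const (γ i)).inv hS

theorem inv_mul_sum_mul_one_sub_inv_div {K ι : Type*} [Field K] (t : Finset ι)
    {d γ : ι → K} (S : K) (hd : ∑ i ∈ t, d i = 0) :
    S⁻¹ * ∑ i ∈ t, d i * (1 - S⁻¹ / γ i) = -(∑ i ∈ t, d i / γ i) / S ^ 2 := by
  have hsplit : ∑ i ∈ t, d i * (1 - S⁻¹ / γ i) = ∑ i ∈ t, d i - S⁻¹ * ∑ i ∈ t, d i / γ i := by
    rw [mul_sum, ← sum_sub_distrib]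
    exact sum_congr rfl fun i _ => by ring
  rw [hsplit, hd]
  ring

theorem stmt6_general {ι : Type*} [Fintype ι] (s : ι → ℝ → ℝ) (γ : ι → ℝ) (σ2 : ℝ)
    (hdiff : ∀ i, Differentiable ℝ (s i)) (hpos : ∀ i x, 0 < s i x)
    (hsum : ∀ x, ∑ i, s i x = 1) (hγ : ∀ i, 0 < γ i)
    (ω : ι → ℝ → ℝ) (hω : ∀ i x, ω i x = (∑ j, s j x / γ j)⁻¹ / γ i) (x : ℝ) :
    deriv (fun y => (∑ i, s i y / γ i)⁻¹ * σ2) x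
      = (∑ i, s i x / γ i)⁻¹ * σ2 * ∑ i, deriv (s i) x * (1 - ω i x) := by
  have hS : ∑ i, s i x / γ i ≠ 0 := by
    have hne : (univ : Finset ι).Nonempty :=
      nonempty_of_sum_ne_zero (f := fun i => s i x) (by rw [hsum x]; exact one_ne_zero)
    exact (sum_pos (fun i _ => div_pos (hpos i x) (hγ i)) hne).ne'
  have hds : ∑ i, deriv (s i) x = 0 :=
    sum_deriv_eq_zero_of_sum_eq_const (fun i => (hdiff i).differentiableAt) hsum
  rw [((hasDerivAt_inv_sum_div (fun i => (hdiff i x).hasDerivAt) hS).mul_const σ2).deriv,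
    ← inv_mul_sum_mul_one_sub_inv_div univ _ hds]
  simp only [hω]
  ring

theorem stmt6 {ι : Type*} [Fintype ι] (s : ι → ℝ → ℝ) (γ : ι → ℝ) (σ2 : ℝ)
    (hdiff : ∀ i, Differentiable ℝ (s i)) (hpos : ∀ i x, 0 < s i x)
    (hsum : ∀ x, ∑ i, s i x = 1) (hγ : ∀ i, 0 < γ i) (hσ : 0 < σ2)
    (ω : ι → ℝ → ℝ) (hω : ∀ i x, ω i x = (∑ j, s j x / γ j)⁻¹ / γ i) (x : ℝ) :
    deriv (fun y => (∑ i, s i y / γ i)⁻¹ * σ2) x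
      = (∑ i, s i x / γ i)⁻¹ * σ2 * ∑ i, deriv (s i) x * (1 - ω i x) :=
  stmt6_general s γ σ2 hdiff hpos hsum hγ ω hω x
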